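/- arXiv:1407.7423 — 5 statements merged into one kernel-verified Lean document; each statement's English description precedes it below -/
import Mathlib

section
/- Partition the six vertices of the complete graph K6 into three 2-element sets e1 = {a1, a2}, e2 = {b1, b2}, e3 = {d1, d2}. Let c : Fin 6 → Bool be a 2-coloring of K6 with no monochromatic cycle of length 4. If c a1 = c a2, then exactly one of the following holds: (c b1 = c b2 and c b1 ≠ c a1) or (c d1 = c d2 and c d1 ≠ c a1); moreover these two alternatives cannot hold simultaneously. -/
/-- `c` is a 2-coloring of `G` with no monochromatic cycle of length `k`. -/
def NoMonoCycle {V : Type*} (G : SimpleGraph V) (k : ℕ) (c : V → Bool) : Prop :=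
  ∀ ⦃v : V⦄ (w : G.Walk v v), w.IsCycle → w.length = k →
    ¬ (∀ u ∈ w.support, c u = c v)

lemma mono4 (c : Fin 6 → Bool) (hc : NoMonoCycle (⊤ : SimpleGraph (Fin 6)) 4 c)
    {v1 v2 v3 v4 : Fin 6}
    (h12 : v1 ≠ v2) (h13 : v1 ≠ v3) (h14 : v1 ≠ v4)
    (h23 : v2 ≠ v3) (h24 : v2 ≠ v4) (h34 : v3 ≠ v4) :
    ¬ (c v2 = c v1 ∧ c v3 = c v1 ∧ c v4 = c v1) := by
  rintro ⟨e2, e3, e4⟩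
  have adj : ∀ u v : Fin 6, u ≠ v → (⊤ : SimpleGraph (Fin 6)).Adj u v := fun u v h => by simpa
  refine hc (.cons (adj v1 v2 h12) (.cons (adj v2 v3 h23) (.cons (adj v3 v4 h34)
      (.cons (adj v4 v1 h14.symm) .nil)))) ?_ rfl ?_
  · rw [SimpleGraph.Walk.isCycle_def]
    refine ⟨?_, by simp, ?_⟩
    · rw [SimpleGraph.Walk.isTrail_def]
      simp only [SimpleGraph.Walk.edges_cons, SimpleGraph.Walk.edges_nil,
        List.nodup_cons, List.mem_cons, List.not_mem_nil, List.nodup_nil, Sym2.eq_iff]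
      tauto
    · simp only [SimpleGraph.Walk.support_cons, SimpleGraph.Walk.support_nil,
        List.tail_cons, List.nodup_cons, List.mem_cons, List.not_mem_nil, List.nodup_nil]
      tauto
  · simp only [SimpleGraph.Walk.support_cons, SimpleGraph.Walk.support_nil, List.mem_cons]
    rintro u (rfl|rfl|rfl|rfl|rfl|h) <;> simp_all

lemma boolkey (x y1 y2 z1 z2 : Bool)
    (h1 : ¬(y1 = x ∧ y2 = x)) (h2 : ¬(y1 = x ∧ z1 = x)) (h3 : ¬(y1 = x ∧ z2 = x))
    (h4 : ¬(y2 = x ∧ z1 = x)) (h5 : ¬(y2 = x ∧ z2 = x)) (h6 : ¬(z1 = x ∧ z2 = x))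
    (h7 : ¬(y2 = y1 ∧ z1 = y1 ∧ z2 = y1)) :
    Xor' (y1 = y2 ∧ y1 ≠ x) (z1 = z2 ∧ z1 ≠ x) := by
  cases x <;> cases y1 <;> cases y2 <;> cases z1 <;> cases z2 <;> simp_all [Xor']

theorem stmt4 (a1 a2 b1 b2 d1 d2 : Fin 6)
    (hpart : [a1, a2, b1, b2, d1, d2].Nodup)
    (c : Fin 6 → Bool) (hc : NoMonoCycle (⊤ : SimpleGraph (Fin 6)) 4 c)
    (ha : c a1 = c a2) :
    Xor' (c b1 = c b2 ∧ c b1 ≠ c a1) (c d1 = c d2 ∧ c d1 ≠ c a1) := by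
  simp only [List.nodup_cons, List.mem_cons, List.not_mem_nil, List.nodup_nil, not_or] at hpart
  obtain ⟨⟨n12, n13, n14, n15, n16, -⟩, ⟨n23, n24, n25, n26, -⟩, ⟨n34, n35, n36, -⟩, ⟨n45, n46, -⟩, ⟨n56, -⟩, _⟩ := hpart
  have pair : ∀ u v : Fin 6, a1 ≠ u → a1 ≠ v → a2 ≠ u → a2 ≠ v → u ≠ v →
      ¬(c u = c a1 ∧ c v = c a1) := by
    rintro u v h1 h2 h3 h4 h5 ⟨e1, e2⟩
    exact mono4 c hc n12 h1 h2 h3 h4 h5 ⟨ha.symm, e1, e2⟩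
  refine boolkey (c a1) (c b1) (c b2) (c d1) (c d2)
    (pair b1 b2 n13 n14 n23 n24 n34) (pair b1 d1 n13 n15 n23 n25 n35)
    (pair b1 d2 n13 n16 n23 n26 n36) (pair b2 d1 n14 n15 n24 n25 n45)
    (pair b2 d2 n14 n16 n24 n26 n46) (pair d1 d2 n15 n16 n25 n26 n56)
    (mono4 c hc n34 n35 n36 n45 n46 n56)
end

section
/- Let m ≥ 1 be an integer and let S_m be the string graph of length m. Let c be a 2-coloring of S_m with no monochromatic cycle of length 3 (no monochromatic triangle). If c (0,0) = c (0,1), then for every i with 0 ≤ i ≤ m one has c (i,0) = c (i,1), and for every i with 0 ≤ i < m one has c (i+1,0) ≠ c (i,0); that is, every juncture is monochromatic and consecutive junctures have opposite colors. -/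
/-- The string graph `S_m`: vertices `Fin (m+1) × Fin 2`, two distinct vertices
`(i,a)` and `(j,b)` are adjacent iff `i` and `j` differ by at most 1. -/
def stringGraph (m : ℕ) : SimpleGraph (Fin (m + 1) × Fin 2) :=
  SimpleGraph.fromRel (fun u v => (u.1 : ℕ) ≤ (v.1 : ℕ) + 1 ∧ (v.1 : ℕ) ≤ (u.1 : ℕ) + 1)

open SimpleGraph in
private lemma mono_tri {V : Type*} {G : SimpleGraph V} {k : ℕ} {c : V → Bool}
    (hc : ∀ ⦃v : V⦄ (w : G.Walk v v), w.IsCycle → w.length = 3 →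
      ¬ (∀ u ∈ w.support, c u = c v))
    {u v w : V} (h1 : G.Adj u v) (h2 : G.Adj v w) (h3 : G.Adj w u)
    (e1 : c u = c v) (e2 : c v = c w) : False := by
  apply hc (Walk.cons h1 (Walk.cons h2 (Walk.cons h3 Walk.nil))) ?_ rfl
  · intro x hx
    simp [Walk.support] at hx
    rcases hx with rfl | rfl | rfl | rfl <;> simp [e1, e2, e1.trans e2]
  · have huv := h1.ne
    have hvw := h2.ne
    have hwu := h3.ne
    constructor
    · constructor
      · simp [Walk.isTrail_def, Sym2.eq, Sym2.rel_iff']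
        aesop
      · simp
    · simpa using ⟨⟨hvw, Ne.symm huv⟩, hwu⟩


private lemma sg_adj {m : ℕ} {u v : Fin (m + 1) × Fin 2} (hne : u ≠ v)
    (h1 : (u.1 : ℕ) ≤ (v.1 : ℕ) + 1) (h2 : (v.1 : ℕ) ≤ (u.1 : ℕ) + 1) :
    (stringGraph m).Adj u v := by
  simp [stringGraph, SimpleGraph.fromRel_adj]
  exact ⟨hne, Or.inl ⟨h1, h2⟩⟩

theorem stmt5 (m : ℕ) (hm : 1 ≤ m)
    (c : Fin (m + 1) × Fin 2 → Bool) (hc : NoMonoCycle (stringGraph m) 3 c)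
    (h0 : c (0, 0) = c (0, 1)) :
    (∀ i : Fin (m + 1), c (i, 0) = c (i, 1)) ∧
    (∀ i : ℕ, ∀ h : i < m,
      c (⟨i + 1, by omega⟩, 0) ≠ c (⟨i, by omega⟩, 0)) := by
  have step : ∀ i : ℕ, ∀ h : i < m,
      c (⟨i, by omega⟩, 0) = c (⟨i, by omega⟩, 1) →
      (c (⟨i + 1, by omega⟩, 0) = c (⟨i + 1, by omega⟩, 1) ∧
        c (⟨i + 1, by omega⟩, 0) ≠ c (⟨i, by omega⟩, 0)) := by
    intro i h hj
    set p0 : Fin (m + 1) × Fin 2 := (⟨i, by omega⟩, 0) with hp0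
    set p1 : Fin (m + 1) × Fin 2 := (⟨i, by omega⟩, 1) with hp1
    set q0 : Fin (m + 1) × Fin 2 := (⟨i + 1, by omega⟩, 0) with hq0
    set q1 : Fin (m + 1) × Fin 2 := (⟨i + 1, by omega⟩, 1) with hq1
    have a01 : (stringGraph m).Adj p0 p1 := by
      apply sg_adj
      · simp [hp0, hp1, Prod.ext_iff]
      · simp [hp0, hp1]
        try omega
      · simp [hp0, hp1]
        try omega
    have a1q0 : (stringGraph m).Adj p1 q0 := by
      apply sg_adj
      · simp [hp1, hq0, Prod.ext_iff, Fin.ext_iff]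
      · simp [hp1, hq0]
        try omega
      · simp [hp1, hq0]
        try omega
    have aq00 : (stringGraph m).Adj q0 p0 := by
      apply sg_adj
      · simp [hp0, hq0, Prod.ext_iff, Fin.ext_iff]
      · simp [hp0, hq0]
        try omega
      · simp [hp0, hq0]
        try omega
    have a1q1 : (stringGraph m).Adj p1 q1 := by
      apply sg_adj
      · simp [hp1, hq1, Prod.ext_iff, Fin.ext_iff]
      · simp [hp1, hq1]
        try omega
      · simp [hp1, hq1]
        try omega
    have aq10 : (stringGraph m).Adj q1 p0 := by
      apply sg_adj
      · simp [hp0, hq1, Prod.ext_iff, Fin.ext_iff]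
      · simp [hp0, hq1]
        try omega
      · simp [hp0, hq1]
        try omega
    have t0 : ¬ (c p1 = c q0) := fun h' =>
      mono_tri (k := 3) hc a01 a1q0 aq00 hj h'
    have t1 : ¬ (c p1 = c q1) := fun h' =>
      mono_tri (k := 3) hc a01 a1q1 aq10 hj h'
    constructor
    · cases hb0 : c q0 <;> cases hb1 : c q1 <;> cases hb : c p1 <;> simp_all
    · cases hb0 : c q0 <;> cases hb : c p0 <;> simp_all
  have junc : ∀ i : ℕ, ∀ h : i ≤ m, c (⟨i, by omega⟩, 0) = c (⟨i, by omega⟩, 1) := by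
    intro i
    induction i with
    | zero => intro _; exact h0
    | succ n ih =>
      intro h
      exact (step n (by omega) (ih (by omega))).1
  constructor
  · intro i
    have := junc i.1 (by omega)
    simpa using this
  · intro i h
    exact (step i h (junc i (by omega))).2
end

section
/- Let l ≥ 5 be an odd integer and let L_l be the loop graph of length l. Then: (a) there exists a 2-coloring of L_l with no monochromatic cycle of length 3 (no monochromatic triangle); and (b) every 2-coloring c of L_l with no monochromatic triangle satisfies c (i,0) ≠ c (i,1) for every i in ZMod l, i.e., every juncture edge receives two different colors. -/
/-- The loop graph `L_l`: vertices `(ZMod l) × Fin 2`, two distinct vertices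
`(i,a)` and `(j,b)` are adjacent iff `i = j`, `j = i + 1` or `i = j + 1`. -/
def loopGraph (l : ℕ) : SimpleGraph (ZMod l × Fin 2) :=
  SimpleGraph.fromRel (fun u v => u.1 = v.1 ∨ v.1 = u.1 + 1 ∨ u.1 = v.1 + 1)

/-!
In the coloring by the `Fin 2` coordinate every juncture edge is bichromatic, and every triangle
contains a juncture edge as soon as `l ∉ {1, 3}`: three pairwise adjacent indices cannot be
distinct, since two of them would be `i + 1` and `i - 1`, which differ by `2`.

Conversely, a monochromatic juncture edge `{(i,0), (i,1)}` forms a triangle with each of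
`(i+1,0)` and `(i+1,1)`, so the next juncture edge is monochromatic of the opposite color.
Going once around the loop flips the color `l` times, which is impossible for odd `l`.
-/

open SimpleGraph

theorem noMonoCycle_three_iff {V : Type*} {G : SimpleGraph V} {c : V → Bool} :
    NoMonoCycle G 3 c ↔ ∀ ⦃a b d : V⦄, G.Adj a b → G.Adj b d → G.Adj d a →
      ¬(c b = c a ∧ c d = c a) := by
  constructor
  · rintro h a b d hab hbd hda ⟨hb, hd⟩
    have hcycle : (Walk.cons hab (Walk.cons hbd (Walk.cons hda Walk.nil))).IsCycle := by
      have := hab.ne; have := hbd.ne; have := hda.ne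
      simp_all [Walk.isCycle_def, eq_comm]
    exact h _ hcycle rfl (by simp [hb, hd])
  · intro h v w _ hlen hmono
    rcases w with _ | ⟨hab, _ | ⟨hbd, _ | ⟨hda, _ | ⟨_, _⟩⟩⟩⟩
    · simp at hlen
    · simp at hlen
    · simp at hlen
    · exact h hab hbd hda ⟨hmono _ (by simp), hmono _ (by simp)⟩
    · simp at hlen

theorem eq_or_eq_or_eq_of_pairwise_near {R : Type*} [CommRing R] (h3 : (3 : R) ≠ 0) {i j k : R}
    (hij : i = j ∨ j = i + 1 ∨ i = j + 1) (hjk : j = k ∨ k = j + 1 ∨ j = k + 1)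
    (hki : k = i ∨ i = k + 1 ∨ k = i + 1) : i = j ∨ j = k ∨ k = i := by
  grind

theorem ZMod.natCast_ne_zero_of_lt {l n : ℕ} (hn : 0 < n) (hnl : n < l) : (n : ZMod l) ≠ 0 :=
  fun h => absurd (Nat.le_of_dvd hn ((ZMod.natCast_eq_zero_iff n l).mp h)) (by omega)

namespace loopGraph

variable {l : ℕ}

theorem adj_iff {u v : ZMod l × Fin 2} :
    (loopGraph l).Adj u v ↔ u ≠ v ∧ (u.1 = v.1 ∨ v.1 = u.1 + 1 ∨ u.1 = v.1 + 1) := by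
  simp only [loopGraph, fromRel_adj]
  tauto

theorem fst_eq_of_triangle (h3 : (3 : ZMod l) ≠ 0) {a b d : ZMod l × Fin 2}
    (hab : (loopGraph l).Adj a b) (hbd : (loopGraph l).Adj b d) (hda : (loopGraph l).Adj d a) :
    a.1 = b.1 ∨ b.1 = d.1 ∨ d.1 = a.1 :=
  eq_or_eq_or_eq_of_pairwise_near h3 (adj_iff.mp hab).2 (adj_iff.mp hbd).2 (adj_iff.mp hda).2

theorem noMonoCycle_three_snd (h3 : (3 : ZMod l) ≠ 0) :
    NoMonoCycle (loopGraph l) 3 (fun p => finTwoEquiv p.2) := by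
  have hjuncture : ∀ ⦃u v : ZMod l × Fin 2⦄, (loopGraph l).Adj u v → u.1 = v.1 →
      finTwoEquiv u.2 ≠ finTwoEquiv v.2 :=
    fun u v huv hfst hsnd => huv.ne (Prod.ext hfst (finTwoEquiv.injective hsnd))
  rw [noMonoCycle_three_iff]
  rintro a b d hab hbd hda ⟨hb, hd⟩
  rcases fst_eq_of_triangle h3 hab hbd hda with h | h | h
  · exact hjuncture hab h hb.symm
  · exact hjuncture hbd h (hb.trans hd.symm)
  · exact hjuncture hda h hd

theorem color_succ_of_juncture_eq {c : ZMod l × Fin 2 → Bool}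
    (hc : NoMonoCycle (loopGraph l) 3 c) (h1 : (1 : ZMod l) ≠ 0) {i : ZMod l}
    (hi : c (i, 0) = c (i, 1)) (a : Fin 2) : c (i + 1, a) = !c (i, 0) := by
  have hsucc : i ≠ i + 1 := fun h => h1 (by linear_combination -h)
  have h01 : (loopGraph l).Adj (i, 0) (i, 1) :=
    adj_iff.mpr ⟨fun h => zero_ne_one (congrArg Prod.snd h), Or.inl rfl⟩
  have h1a : (loopGraph l).Adj (i, 1) (i + 1, a) :=
    adj_iff.mpr ⟨fun h => hsucc (congrArg Prod.fst h), Or.inr (Or.inl rfl)⟩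
  have ha0 : (loopGraph l).Adj (i + 1, a) (i, 0) :=
    adj_iff.mpr ⟨fun h => hsucc (congrArg Prod.fst h).symm, Or.inr (Or.inr rfl)⟩
  exact Bool.eq_not_of_ne fun ha => noMonoCycle_three_iff.mp hc h01 h1a ha0 ⟨hi.symm, ha⟩

theorem juncture_ne {c : ZMod l × Fin 2 → Bool} (hc : NoMonoCycle (loopGraph l) 3 c)
    (h1 : (1 : ZMod l) ≠ 0) (hodd : Odd l) (i : ZMod l) : c (i, 0) ≠ c (i, 1) := by
  intro hi
  have hparity : ∀ n : ℕ,
      c (i + n, 0) = c (i + n, 1) ∧ (c (i + n, 0) = c (i, 0) ↔ Even n) := by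
    intro n
    induction n with
    | zero => simpa using hi
    | succ n ih =>
      have hnext := color_succ_of_juncture_eq hc h1 ih.1
      rw [Nat.cast_succ, ← add_assoc, hnext 0, hnext 1, Nat.even_add_one, ← ih.2]
      cases c (i + n, 0) <;> cases c (i, 0) <;> simp
  have := (hparity l).2
  rw [ZMod.natCast_self, add_zero] at this
  exact Nat.not_even_iff_odd.mpr hodd (this.mp rfl)

end loopGraph

theorem stmt6 (l : ℕ) (hl : 5 ≤ l) (hodd : Odd l) :
    (∃ c : ZMod l × Fin 2 → Bool, NoMonoCycle (loopGraph l) 3 c) ∧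
    (∀ c : ZMod l × Fin 2 → Bool, NoMonoCycle (loopGraph l) 3 c →
      ∀ i : ZMod l, c (i, 0) ≠ c (i, 1)) := by
  have h1 : ((1 : ℕ) : ZMod l) ≠ 0 := ZMod.natCast_ne_zero_of_lt one_pos (by omega)
  have h3 : ((3 : ℕ) : ZMod l) ≠ 0 := ZMod.natCast_ne_zero_of_lt three_pos (by omega)
  push_cast at h1 h3
  exact ⟨⟨_, loopGraph.noMonoCycle_three_snd h3⟩,
    fun c hc => loopGraph.juncture_ne hc h1 hodd⟩
end

section
/- Let l ≥ 4 be an even integer and let L_l be the loop graph of length l. Then for every i in ZMod l there exists a 2-coloring c of L_l with no monochromatic cycle of length 3 (no monochromatic triangle) such that c (i,0) = c (i,1); that is, no juncture edge of an even loop is forced to receive two different colors. -/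
lemma parity_flip (l : ℕ) (hl : 4 ≤ l) (heven : Even l) (j : ZMod l) :
    ((j + 1 : ZMod l)).val % 2 ≠ j.val % 2 := by
  haveI : NeZero l := ⟨by omega⟩
  haveI : Fact (1 < l) := ⟨by omega⟩
  have h1 : (1 : ZMod l).val = 1 := ZMod.val_one l
  have key : (j + 1 : ZMod l).val = (j.val + 1) % l := by rw [ZMod.val_add, h1]
  have hj := ZMod.val_lt j
  obtain ⟨m, hm⟩ := heven
  by_cases h : j.val + 1 < l
  · rw [Nat.mod_eq_of_lt h] at key; omega
  · have hle : j.val + 1 = l := by omega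
    rw [hle, Nat.mod_self] at key
    omega

lemma adj_same_parity (l : ℕ) (hl : 4 ≤ l) (heven : Even l)
    (u u' : ZMod l × Fin 2) (h : (loopGraph l).Adj u u')
    (hpar : u.1.val % 2 = u'.1.val % 2) : u.1 = u'.1 := by
  rw [loopGraph, SimpleGraph.fromRel_adj] at h
  rcases h.2 with (h' | h' | h') | (h' | h' | h')
  · exact h'
  · exact absurd (h' ▸ hpar.symm) (parity_flip l hl heven u.1)
  · exact absurd (h' ▸ hpar) (parity_flip l hl heven u'.1)
  · exact h'.symm
  · exact absurd (h' ▸ hpar) (parity_flip l hl heven u'.1)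
  · exact absurd (h' ▸ hpar.symm) (parity_flip l hl heven u.1)

theorem stmt8 (l : ℕ) (hl : 4 ≤ l) (heven : Even l) (i : ZMod l) :
    ∃ c : ZMod l × Fin 2 → Bool,
      NoMonoCycle (loopGraph l) 3 c ∧ c (i, 0) = c (i, 1) := by
  refine ⟨fun p => decide (p.1.val % 2 = 0), ?_, rfl⟩
  intro v w hc hlen hall
  cases w with
  | nil => simp at hlen
  | cons h1 p =>
    rename_i a
    cases p with
    | nil => simp at hlen
    | cons h2 p' =>
      rename_i b
      cases p' with
      | nil => simp at hlen
      | cons h3 p'' =>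
        cases p'' with
        | cons h4 p''' => simp [SimpleGraph.Walk.length_cons] at hlen
        | nil =>
          have ha : decide (a.1.val % 2 = 0) = decide (v.1.val % 2 = 0) :=
            hall a (by simp)
          have hb : decide (b.1.val % 2 = 0) = decide (v.1.val % 2 = 0) :=
            hall b (by simp)
          rw [decide_eq_decide] at ha hb
          have hpa : a.1.val % 2 = v.1.val % 2 := by omega
          have hpb : b.1.val % 2 = v.1.val % 2 := by omega
          have e1 : v.1 = a.1 := adj_same_parity l hl heven v a h1 hpa.symm
          have e2 : b.1 = v.1 := adj_same_parity l hl heven b v h3 hpb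
          have hnodup := hc.2
          simp [List.Nodup] at hnodup
          obtain ⟨⟨hab, hav⟩, hbv⟩ := hnodup
          have d1 : a.2 ≠ v.2 := fun h => hav (Prod.ext e1.symm h)
          have d2 : b.2 ≠ v.2 := fun h => hbv (Prod.ext e2 h)
          have d3 : a.2 ≠ b.2 := fun h => hab (Prod.ext (e1.symm.trans e2.symm) h)
          have := a.2.isLt; have := b.2.isLt; have := v.2.isLt
          have n1 : a.2.val ≠ v.2.val := fun h => d1 (Fin.ext h)
          have n2 : b.2.val ≠ v.2.val := fun h => d2 (Fin.ext h)
          have n3 : a.2.val ≠ b.2.val := fun h => d3 (Fin.ext h)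
          omega
end

section
/- For every integer k ≥ 3 there exists a finite simple graph G together with two adjacent vertices x and y of G such that: (a) G admits a 2-coloring with no monochromatic cycle of length k; and (b) every 2-coloring c of G with no monochromatic cycle of length k satisfies c x ≠ c y. -/
/-!
For `k = m + 1 ≥ 4` the gadget is `K_m ∨ (K_m ⊔ K_m)`. Coloring the universal clique `true` and
the other two cliques `false` is valid: a monochromatic cycle stays inside one of the three
cliques, which have only `m` vertices. For the forcing, note that a clique together with an
outside vertex adjacent to two of its vertices carries a Hamiltonian cycle. Hence, for each
color `b`, the `b`-vertices of the universal part and of another part, which form a clique,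
number at most `m`; counting both colors, exactly `m`. If the universal part had between `2`
and `m - 1` vertices of color `b`, those `m` vertices of parts `0` and `1`, plus a `b`-vertex of
part `2`, would form a monochromatic `(m + 1)`-cycle. As `m ≥ 3`, some color takes two universal
vertices, hence all of them, and parts `1` and `2` get the other color.

For `k = 3` the gadget is `C₅ ∨ K₂`. Some edge of the odd cycle is monochromatic, so both hubs
take the other color, and then no vertex of the cycle may share the hubs' color.
-/

open SimpleGraph Finset

namespace SimpleGraph

variable {V : Type*} {G : SimpleGraph V}

theorem exists_isCycle_of_isChain {a : V} {l : List V} (hl : 2 ≤ l.length)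
    (hnd : (a :: l).Nodup) (hchain : (a :: (l ++ [a])).IsChain G.Adj) :
    ∃ w : G.Walk a a, w.IsCycle ∧ w.length = l.length + 1 ∧ w.support = a :: (l ++ [a]) := by
  obtain ⟨w, hsupp⟩ : ∃ w : G.Walk a a, w.support = a :: (l ++ [a]) :=
    ⟨(Walk.ofSupport _ (List.cons_ne_nil _ _) hchain).copy (List.head_cons ..) (by simp),
      by rw [Walk.support_copy, Walk.support_ofSupport]⟩
  have hlen : w.length = l.length + 1 := by
    have := w.length_support
    simp only [hsupp, List.length_cons, List.length_append, List.length_nil] at this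
    omega
  refine ⟨w, Walk.isCycle_iff_isPath_tail_and_le_length.mpr ⟨Walk.IsPath.mk' ?_, by omega⟩,
    hlen, hsupp⟩
  rw [Walk.support_tail_of_not_nil _ (by simp [Walk.not_nil_iff_lt_length, hlen]), hsupp]
  rw [List.nodup_cons] at hnd
  simpa [List.nodup_append] using ⟨hnd.2, fun x hx hxa => hnd.1 (hxa ▸ hx)⟩

theorem IsClique.exists_isCycle_of_adj {s : Finset V} (hs : G.IsClique (s : Set V))
    {u v w : V} (hu : u ∈ s) (hv : v ∈ s) (huv : u ≠ v) (hw : w ∉ s)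
    (hwu : G.Adj w u) (hwv : G.Adj w v) :
    ∃ p : G.Walk w w, p.IsCycle ∧ p.length = #s + 1 ∧ ∀ x ∈ p.support, x = w ∨ x ∈ s := by
  classical
  set L := ((s.erase u).erase v).toList
  have hLlen : L.length + 2 = #s := by
    have := one_lt_card.mpr ⟨u, hu, v, hv, huv⟩
    simp only [L, length_toList, card_erase_of_mem (mem_erase.mpr ⟨huv.symm, hv⟩),
      card_erase_of_mem hu]
    omega
  have hsub : ∀ x ∈ u :: (L ++ [v]), x ∈ s := by
    simp only [L, List.mem_cons, List.mem_append, mem_toList, mem_erase, List.not_mem_nil,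
      or_false]
    rintro x (rfl | ⟨-, -, hx⟩ | rfl) <;> assumption
  have hnd : (u :: (L ++ [v])).Nodup := by
    simp +contextual [L, List.nodup_append, huv, nodup_toList]
  have hpath : (u :: (L ++ [v])).IsChain G.Adj :=
    (hnd.imp_of_mem fun hx hy hxy => hs (hsub _ hx) (hsub _ hy) hxy).isChain
  obtain ⟨p, hcyc, hlen, hsupp⟩ := exists_isCycle_of_isChain (a := w) (l := u :: (L ++ [v]))
    (by simp) (List.nodup_cons.mpr ⟨fun h => hw (hsub w h), hnd⟩)
    (.cons_cons hwu (hpath.append (.singleton w) (by simp [List.getLast?_cons, hwv.symm])))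
  refine ⟨p, hcyc, ?_, fun x hx => ?_⟩
  · simp only [hlen, List.length_cons, List.length_append, List.length_nil]
    omega
  · rw [hsupp, List.mem_cons, List.mem_append, List.mem_singleton] at hx
    rcases hx with hx | hx | hx
    exacts [.inl hx, .inr (hsub x hx), .inl hx]

theorem Walk.IsCycle.length_le_card {v : V} {w : G.Walk v v} (hw : w.IsCycle) {s : Finset V}
    (hs : ∀ x ∈ w.support, x ∈ s) : w.length ≤ #s := by
  classical
  calc w.length = #w.support.tail.toFinset := by
        rw [List.toFinset_card_of_nodup hw.support_nodup, List.length_tail, w.length_support]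
        rfl
    _ ≤ #s := card_le_card fun x hx => hs x (List.mem_of_mem_tail (List.mem_toFinset.mp hx))

end SimpleGraph

section NoMonoCycle

variable {V : Type*} {G : SimpleGraph V} {k : ℕ} {c : V → Bool}

theorem NoMonoCycle.card_add_one_ne (hc : NoMonoCycle G k c) {s : Finset V}
    (hs : G.IsClique (s : Set V)) {u v w : V} (hu : u ∈ s) (hv : v ∈ s) (huv : u ≠ v)
    (hw : w ∉ s) (hwu : G.Adj w u) (hwv : G.Adj w v) (hcol : ∀ x ∈ s, c x = c w) :
    #s + 1 ≠ k := by
  rintro rfl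
  obtain ⟨p, hcyc, hlen, hsupp⟩ := hs.exists_isCycle_of_adj hu hv huv hw hwu hwv
  exact hc p hcyc hlen fun x hx => (hsupp x hx).elim (fun h => h ▸ rfl) (hcol x)

theorem NoMonoCycle.card_lt_of_isClique (hc : NoMonoCycle G k c) (hk : 3 ≤ k) {s : Finset V}
    (hs : G.IsClique (s : Set V)) {b : Bool} (hcol : ∀ x ∈ s, c x = b) : #s < k := by
  classical
  by_contra! hsk
  obtain ⟨t, hts, rfl⟩ := exists_subset_card_eq hsk
  obtain ⟨w, hw⟩ : t.Nonempty := card_pos.mp (by omega)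
  have hcard : #(t.erase w) + 1 = #t := card_erase_add_one hw
  obtain ⟨u, hu, v, hv, huv⟩ := one_lt_card.mp (by omega : 1 < #(t.erase w))
  have hts' : t.erase w ⊆ s := (erase_subset w t).trans hts
  have hadj {x} (hx : x ∈ t.erase w) : G.Adj w x :=
    hs (hts hw) (hts' hx) (ne_of_mem_erase hx).symm
  exact hc.card_add_one_ne (hs.subset (coe_subset.mpr hts')) hu hv huv (notMem_erase w t)
    (hadj hu) (hadj hv) (fun x hx => (hcol x (hts' hx)).trans (hcol w (hts hw)).symm) hcard

theorem noMonoCycle_three_iff_s12 :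
    NoMonoCycle G 3 c ↔
      ∀ p q r, G.Adj p q → G.Adj q r → G.Adj r p → ¬(c q = c p ∧ c r = c p) := by
  classical
  refine ⟨fun hc p q r hpq hqr hrp ⟨hq, hr⟩ => ?_, fun h v w _ hlen hmono => ?_⟩
  · refine hc.card_add_one_ne (s := {q, r}) ?_ (mem_insert_self q {r})
      (mem_insert_of_mem (mem_singleton_self r)) hqr.ne ?_ hpq hrp.symm ?_
      (by rw [card_pair hqr.ne])
    · rw [coe_pair]
      exact isClique_pair.mpr fun _ => hqr
    · simp [hpq.ne, hrp.ne.symm]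
    · simp [hq, hr]
  · match w, hlen with
    | .cons h₁ (.cons h₂ (.cons h₃ .nil)), _ =>
      exact h _ _ _ h₁ h₂ h₃ ⟨hmono _ (by simp), hmono _ (by simp)⟩

end NoMonoCycle

/-- `K_m ∨ (K_m ⊔ K_m)`, with part `0` the universal clique. -/
def cliqueGadget (m : ℕ) : SimpleGraph (Fin 3 × Fin m) where
  Adj p q := p ≠ q ∧ (p.1 = 0 ∨ q.1 = 0 ∨ p.1 = q.1)
  symm := ⟨fun _ _ h => ⟨h.1.symm, by omega⟩⟩
  loopless := ⟨fun _ h => h.1 rfl⟩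

@[simp]
theorem cliqueGadget_adj {m : ℕ} {p q : Fin 3 × Fin m} :
    (cliqueGadget m).Adj p q ↔ p ≠ q ∧ (p.1 = 0 ∨ q.1 = 0 ∨ p.1 = q.1) :=
  Iff.rfl

namespace cliqueGadget

variable {m : ℕ}

theorem fst_eq_of_forall_fst_ne_zero {a z : Fin 3 × Fin m} (p : (cliqueGadget m).Walk a z)
    (hp : ∀ x ∈ p.support, x.1 ≠ 0) : ∀ x ∈ p.support, x.1 = a.1 := by
  induction p with
  | nil => simp
  | @cons a b z hab q ih =>
    have hb : b.1 = a.1 := by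
      have := hp a (by simp)
      have := hp b (by simp)
      have := (cliqueGadget_adj.mp hab).2
      omega
    intro x hx
    rw [Walk.support_cons, List.mem_cons] at hx
    rcases hx with rfl | hx
    · rfl
    · exact (ih (fun y hy => hp y (by simp [hy])) x hx).trans hb

theorem noMonoCycle_fst_eq_zero : NoMonoCycle (cliqueGadget m) (m + 1) (fun p => p.1 = 0) := by
  intro v w hcyc hlen hmono
  have hpart : ∀ x ∈ w.support, x.1 = v.1 := by
    by_cases hv : v.1 = 0
    · intro x hx
      simpa [hv] using hmono x hx
    · exact fst_eq_of_forall_fst_ne_zero w fun x hx => by simpa [hv] using hmono x hx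
  have := hcyc.length_le_card (s := {v.1} ×ˢ univ) (by simpa [eq_comm] using hpart)
  simp only [card_product, card_singleton, card_univ, Fintype.card_fin, one_mul] at this
  omega

def colorPart (c : Fin 3 × Fin m → Bool) (i : Fin 3) (b : Bool) : Finset (Fin 3 × Fin m) :=
  {p | p.1 = i ∧ c p = b}

variable {c : Fin 3 × Fin m → Bool}

theorem card_colorPart_add_card_colorPart_not (i : Fin 3) (b : Bool) :
    #(colorPart c i b) + #(colorPart c i !b) = m := by
  have hpart : #(univ.filter fun p : Fin 3 × Fin m => p.1 = i) = m := by
    rw [show univ.filter (fun p : Fin 3 × Fin m => p.1 = i) = {i} ×ˢ univ by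
      ext; simp [Prod.ext_iff, eq_comm]]
    simp
  rw [← card_filter_add_card_filter_not (p := (c · = b))] at hpart
  convert hpart using 3 <;> ext <;> simp [colorPart, Bool.eq_not]

theorem isClique_colorPart_zero_union (i : Fin 3) (b : Bool) :
    (cliqueGadget m).IsClique ↑(colorPart c 0 b ∪ colorPart c i b) := by
  intro p hp q hq hpq
  simp only [colorPart, coe_union, coe_filter, mem_univ, true_and, Set.mem_union,
    Set.mem_ofPred_eq] at hp hq
  exact cliqueGadget_adj.mpr ⟨hpq, by omega⟩

theorem card_colorPart_zero_union {i : Fin 3} (hi : i ≠ 0) (b : Bool) :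
    #(colorPart c 0 b ∪ colorPart c i b) = #(colorPart c 0 b) + #(colorPart c i b) :=
  card_union_of_disjoint (disjoint_filter.mpr fun _ _ h₀ hᵢ => hi (hᵢ.1.symm.trans h₀.1))

theorem card_colorPart_zero_add_card_colorPart (hc : NoMonoCycle (cliqueGadget m) (m + 1) c)
    (hm : 2 ≤ m) {i : Fin 3} (hi : i ≠ 0) (b : Bool) :
    #(colorPart c 0 b) + #(colorPart c i b) = m := by
  have hle (b : Bool) : #(colorPart c 0 b) + #(colorPart c i b) ≤ m := by
    rw [← card_colorPart_zero_union hi, ← Nat.lt_succ_iff]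
    refine hc.card_lt_of_isClique (by omega) (isClique_colorPart_zero_union i b) (b := b) ?_
    simp only [colorPart, mem_union, mem_filter, mem_univ, true_and]
    tauto
  have := hle b
  have := hle (!b)
  have := card_colorPart_add_card_colorPart_not (c := c) 0 b
  have := card_colorPart_add_card_colorPart_not (c := c) i b
  omega

theorem card_colorPart_zero_le_one_or_eq (hc : NoMonoCycle (cliqueGadget m) (m + 1) c)
    (hm : 2 ≤ m) (b : Bool) : #(colorPart c 0 b) ≤ 1 ∨ #(colorPart c 0 b) = m := by
  by_contra! h
  obtain ⟨u, hu, v, hv, huv⟩ := one_lt_card.mp h.1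
  obtain ⟨w, hw⟩ : (colorPart c 2 b).Nonempty := by
    have := card_colorPart_zero_add_card_colorPart hc hm (i := 2) (by decide) b
    rw [← card_pos]
    omega
  have hcard : #(colorPart c 0 b ∪ colorPart c 1 b) = m := by
    rw [card_colorPart_zero_union one_ne_zero,
      card_colorPart_zero_add_card_colorPart hc hm one_ne_zero]
  simp only [colorPart, mem_filter, mem_univ, true_and] at hu hv hw
  refine hc.card_add_one_ne (isClique_colorPart_zero_union 1 b) (u := u) (v := v) (w := w)
    ?_ ?_ huv ?_ ?_ ?_ ?_ (by rw [hcard])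
  all_goals simp +contextual [colorPart, Prod.ext_iff, or_imp, hu, hv, hw]

theorem ne_of_noMonoCycle (hc : NoMonoCycle (cliqueGadget m) (m + 1) c) (hm : 3 ≤ m)
    (u a : Fin m) : c (0, u) ≠ c (1, a) := by
  intro h
  set b := c (0, u)
  have hu : 0 < #(colorPart c 0 b) := card_pos.mpr ⟨(0, u), by simp [colorPart, b]⟩
  have ha : 0 < #(colorPart c 1 b) := card_pos.mpr ⟨(1, a), by simp [colorPart, h]⟩
  have hcompl := card_colorPart_add_card_colorPart_not (c := c) 0 b
  have hsum := card_colorPart_zero_add_card_colorPart hc (by omega) one_ne_zero b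
  rcases card_colorPart_zero_le_one_or_eq hc (by omega) b with hb | hb <;>
    rcases card_colorPart_zero_le_one_or_eq hc (by omega) (!b) with hb' | hb' <;> omega

end cliqueGadget

/-- `C₅ ∨ K₂`, the hubs being `.inr 0` and `.inr 1`. -/
def fiveCycleGadget : SimpleGraph (ZMod 5 ⊕ Fin 2) where
  Adj
    | .inl a, .inl b => a - b = 1 ∨ b - a = 1
    | .inr u, .inr v => u ≠ v
    | _, _ => True
  symm := ⟨by rintro (a | u) (b | v) h <;> simp_all [or_comm, eq_comm]⟩
  loopless := ⟨by
    rintro (a | u) h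
    · simp only [sub_self, or_self] at h
      exact absurd h (by decide)
    · exact h rfl⟩

instance : DecidableRel fiveCycleGadget.Adj
  | .inl a, .inl b => inferInstanceAs (Decidable (a - b = 1 ∨ b - a = 1))
  | .inr u, .inr v => inferInstanceAs (Decidable (u ≠ v))
  | .inl _, .inr _ => isTrue trivial
  | .inr _, .inl _ => isTrue trivial

namespace fiveCycleGadget

theorem noMonoCycle_isRight : NoMonoCycle fiveCycleGadget 3 Sum.isRight :=
  noMonoCycle_three_iff_s12.mpr (by decide)

theorem ne_of_noMonoCycle {c : ZMod 5 ⊕ Fin 2 → Bool} (hc : NoMonoCycle fiveCycleGadget 3 c) :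
    c (.inr 0) ≠ c (.inl 0) := by
  have htri := noMonoCycle_three_iff_s12.mp hc
  obtain ⟨i, hi⟩ : ∃ i : ZMod 5, c (.inl i) = c (.inl (i + 1)) := by
    have : ∀ f : ZMod 5 → Bool, ∃ i, f i = f (i + 1) := by decide
    exact this _
  have hhub (u : Fin 2) : c (.inr u) ≠ c (.inl i) := fun h =>
    htri (.inl i) (.inl (i + 1)) (.inr u) (Or.inr (by ring)) trivial trivial ⟨hi.symm, h⟩
  have hhubs : c (.inr 1) = c (.inr 0) :=
    (Bool.eq_not.mpr (hhub 1)).trans (Bool.eq_not.mpr (hhub 0)).symm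
  intro h
  exact htri (.inl 0) (.inr 0) (.inr 1) trivial (by decide) trivial ⟨h, hhubs.trans h⟩

end fiveCycleGadget

theorem stmt12 (k : ℕ) (hk : 3 ≤ k) :
    ∃ (V : Type) (_ : Fintype V) (G : SimpleGraph V) (x y : V),
      G.Adj x y ∧
      (∃ c : V → Bool, NoMonoCycle G k c) ∧
      (∀ c : V → Bool, NoMonoCycle G k c → c x ≠ c y) := by
  obtain rfl | hk := hk.eq_or_lt
  · exact ⟨_, inferInstance, fiveCycleGadget, .inr 0, .inl 0, trivial,
      ⟨_, fiveCycleGadget.noMonoCycle_isRight⟩, fun _ => fiveCycleGadget.ne_of_noMonoCycle⟩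
  obtain ⟨m, rfl⟩ : ∃ m, k = m + 1 := ⟨k - 1, by omega⟩
  refine ⟨_, inferInstance, cliqueGadget m, (0, ⟨0, by omega⟩), (1, ⟨0, by omega⟩), by simp,
    ⟨_, cliqueGadget.noMonoCycle_fst_eq_zero⟩,
    fun _ hc => cliqueGadget.ne_of_noMonoCycle hc (by omega) _ _⟩
end
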